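/- For n ≥ 6 and any two distinct indices i, j ∈ {3,...,n}, the inequality x_i + x_j ≥ v_1 + v_2 is valid for all circuits on values v_1 < ... < v_n, and the minimum of x_i + x_j over all circuits equals v_1 + v_2. -/

import Mathlib

/-- A circuit on `{1,...,n}`: a permutation of `Fin n` that is a single `n`-cycle. -/
def IsCircuitPerm {n : ℕ} (σ : Equiv.Perm (Fin n)) : Prop :=
  σ.IsCycle ∧ σ.support = Finset.univ

/-- A circuit point on values `v`: `x i = v (σ i)` for some single-`n`-cycle permutation `σ`. -/
def IsCircuitPt {n : ℕ} (v : Fin n → ℝ) (x : Fin n → ℝ) : Prop :=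
  ∃ σ : Equiv.Perm (Fin n), IsCircuitPerm σ ∧ ∀ i, x i = v (σ i)

/-! Since `σ` is injective, `x i` and `x j` are two distinct values, so their sum is at least
`v 0 + v 1`. The bound is attained by any full cycle containing `i ↦ 0` and `j ↦ 1`, obtained by
closing the path `i, 0, j, 1` up through the remaining indices (`List.formPerm`); this needs
`i, j ∉ {0, 1}`. -/

theorem Fin.apply_zero_add_apply_one_le {n : ℕ} (hn : 2 ≤ n) {β : Type*} [AddCommMonoid β]
    [PartialOrder β] [IsOrderedAddMonoid β] {v : Fin n → β} (hv : Monotone v)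
    {a b : Fin n} (hab : a ≠ b) :
    v ⟨0, by omega⟩ + v ⟨1, by omega⟩ ≤ v a + v b := by
  wlog h : a < b generalizing a b
  · rw [add_comm (v a)]
    exact this hab.symm (lt_of_le_of_ne (not_lt.mp h) hab.symm)
  exact add_le_add (hv (Fin.le_def.mpr (Nat.zero_le _)))
    (hv (Fin.le_def.mpr (Nat.one_le_of_lt (Fin.lt_def.mp h))))

theorem List.exists_isCycle_support_eq_univ_extending {α : Type*} [Fintype α] [DecidableEq α]
    (l : List α) (hl : l.Nodup) (hlen : 2 ≤ l.length) :
    ∃ σ : Equiv.Perm α, σ.IsCycle ∧ σ.support = Finset.univ ∧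
      ∀ k (hk : k + 1 < l.length), σ l[k] = l[k + 1] := by
  set L := l ++ (Finset.univ \ l.toFinset).toList
  have hnd : L.Nodup :=
    List.nodup_append.mpr ⟨hl, Finset.nodup_toList _,
      by simpa using fun a ha b hb hab => hb (hab ▸ ha)⟩
  have hLlen : 2 ≤ L.length := by simp only [L, List.length_append]; omega
  refine ⟨L.formPerm, List.isCycle_formPerm hnd hLlen, ?_, fun k hk => ?_⟩
  · rw [List.support_formPerm_of_nodup L hnd]
    · ext x; by_cases hx : x ∈ l <;> simp [L, hx]
    · rintro x hx; simp [hx] at hLlen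
  · have := List.formPerm_apply_lt_getElem L hnd k (by simp only [L, List.length_append]; omega)
    simpa [L, List.getElem_append_left, hk, Nat.lt_of_succ_lt hk] using this

theorem stmt_10 (n : ℕ) (hn : 6 ≤ n) (v : Fin n → ℝ) (hv : StrictMono v)
    (i j : Fin n) (hij : i ≠ j) (hi : 2 ≤ (i : ℕ)) (hj : 2 ≤ (j : ℕ)) :
    (∀ x : Fin n → ℝ, IsCircuitPt v x →
      v ⟨0, by omega⟩ + v ⟨1, by omega⟩ ≤ x i + x j) ∧
    (∃ x : Fin n → ℝ, IsCircuitPt v x ∧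
      x i + x j = v ⟨0, by omega⟩ + v ⟨1, by omega⟩) := by
  constructor
  · rintro x ⟨σ, -, hx⟩
    rw [hx i, hx j]
    exact Fin.apply_zero_add_apply_one_le (by omega) hv.monotone (σ.injective.ne hij)
  · have hnd : [i, ⟨0, by omega⟩, j, ⟨1, by omega⟩].Nodup := by
      have := Fin.val_ne_of_ne hij
      simp only [List.nodup_cons, List.mem_cons, List.not_mem_nil, Fin.ext_iff,
        List.nodup_nil, or_false, not_false_eq_true, and_true]
      omega
    obtain ⟨σ, hcyc, hsupp, hσ⟩ :=
      List.exists_isCycle_support_eq_univ_extending _ hnd (by simp)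
    refine ⟨fun k => v (σ k), ⟨σ, ⟨hcyc, hsupp⟩, fun _ => rfl⟩, ?_⟩
    show v (σ i) + v (σ j) = _
    rw [show σ i = ⟨0, _⟩ from hσ 0 (by simp), show σ j = ⟨1, _⟩ from hσ 2 (by simp)]
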